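/- Let x_0,…,x_d and z_0,…,z_d be points in a Euclidean space such that the squared distances satisfy ‖x_i − x_j‖² − ‖z_i − z_j‖² ∈ [β − ε, β + ε] for all i ≠ j, where ε < β/(64d²). Then there exist points w_0,…,w_d forming a d-dimensional simplex with ‖w_i − w_j‖² = ‖x_i − x_j‖² − ‖z_i − z_j‖², and the points f_i = (w_i, z_i) in the orthogonal direct sum satisfy ‖f_i − f_j‖ = ‖x_i − x_j‖ for all i, j; i.e., {f_0,…,f_d} is isometric to {x_0,…,x_d}. -/

import Mathlib

/-! The numbers `cᵢⱼ = ‖xᵢ - xⱼ‖² - ‖zᵢ - zⱼ‖²` are the squared distances of a `d`-simplex as soon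
as the matrix `(c₀ᵢ + c₀ⱼ - cᵢⱼ) / 2` (by polarization, the Gram matrix that the edge vectors
`wᵢ - w₀` would have) is positive definite: the `wᵢ - w₀` can then be taken to be the columns of its
square root. Here that matrix is entrywise within `3ε/2` of `β/2 (I + J)`, whose quadratic form is
at least `β/2 ‖v‖²`, while the perturbation contributes at most `3ε/2 (∑ |vᵢ|)² ≤ 3εd/2 ‖v‖²`.
Finally Pythagoras in the `ℓ²` product gives `‖fᵢ - fⱼ‖² = cᵢⱼ + ‖zᵢ - zⱼ‖² = ‖xᵢ - xⱼ‖²`. -/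

open Finset Matrix
open scoped InnerProductSpace

theorem Matrix.abs_dotProduct_mulVec_le {n : Type*} [Fintype n] {E : Matrix n n ℝ} {η : ℝ}
    (hE : ∀ i j, |E i j| ≤ η) (v : n → ℝ) :
    |v ⬝ᵥ E *ᵥ v| ≤ η * (∑ i, |v i|) ^ 2 := by
  have hexpand : v ⬝ᵥ E *ᵥ v = ∑ i, ∑ j, v i * E i j * v j := by
    simp only [dotProduct, mulVec, mul_sum, mul_assoc]
  calc |v ⬝ᵥ E *ᵥ v| ≤ ∑ i, ∑ j, |v i| * η * |v j| := by
        rw [hexpand]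
        refine (abs_sum_le_sum_abs _ _).trans (sum_le_sum fun i _ =>
          (abs_sum_le_sum_abs _ _).trans (sum_le_sum fun j _ => ?_))
        rw [abs_mul, abs_mul]
        gcongr
        exact hE i j
    _ = η * (∑ i, |v i|) ^ 2 := by
        rw [sq, sum_mul_sum, mul_sum]
        exact sum_congr rfl fun i _ => by rw [mul_sum]; exact sum_congr rfl fun j _ => by ring

theorem Matrix.dotProduct_of_const_mulVec {n : Type*} [Fintype n] (b : ℝ) (v : n → ℝ) :
    v ⬝ᵥ (of fun _ _ => b : Matrix n n ℝ) *ᵥ v = b * (∑ i, v i) ^ 2 := by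
  rw [sq, sum_mul_sum, mul_sum]
  simp only [dotProduct, mulVec, of_apply, mul_sum]
  exact sum_congr rfl fun i _ => sum_congr rfl fun j _ => by ring

theorem Matrix.posDef_of_abs_sub_le {n : Type*} [Fintype n] [DecidableEq n]
    {G : Matrix n n ℝ} (hG : G.IsHermitian) {a b η : ℝ} (hb : 0 ≤ b) (hη : 0 ≤ η)
    (hηa : η * Fintype.card n < a)
    (hE : ∀ i j, |(G - (a • 1 + of fun _ _ => b : Matrix n n ℝ)) i j| ≤ η) :
    G.PosDef := by
  refine .of_dotProduct_mulVec_pos hG fun v hv => ?_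
  set E := G - (a • 1 + of fun _ _ => b)
  have hsplit : v ⬝ᵥ G *ᵥ v = a * (v ⬝ᵥ v) + b * (∑ i, v i) ^ 2 + v ⬝ᵥ E *ᵥ v := by
    simp only [E, sub_mulVec, add_mulVec, smul_mulVec, one_mulVec, dotProduct_sub, dotProduct_add,
      dotProduct_smul, dotProduct_of_const_mulVec, smul_eq_mul]
    ring
  have hS : 0 < v ⬝ᵥ v := by simpa using dotProduct_star_self_pos_iff.mpr hv
  have hCS : (∑ i, |v i|) ^ 2 ≤ Fintype.card n * (v ⬝ᵥ v) := by
    simpa [dotProduct, sq_abs, ← sq] using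
      sq_sum_le_card_mul_sum_sq (s := univ) (f := fun i => |v i|)
  have := abs_le.mp (abs_dotProduct_mulVec_le hE v)
  rw [star_trivial, hsplit]
  nlinarith [sq_nonneg (∑ i, v i), mul_le_mul_of_nonneg_left hCS hη]

open scoped MatrixOrder ComplexOrder in
theorem Matrix.PosSemidef.exists_gram_eq {n 𝕜 : Type*} [Fintype n] [RCLike 𝕜] {G : Matrix n n 𝕜}
    (hG : G.PosSemidef) : ∃ v : n → EuclideanSpace 𝕜 n, gram 𝕜 v = G := by
  classical
  set B := CFC.sqrt G
  refine ⟨fun j => WithLp.toLp 2 fun i => B i j, ?_⟩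
  rw [gram_eq_conjTranspose_mul (EuclideanSpace.basisFun n 𝕜)]
  have hB : (of fun i j => (EuclideanSpace.basisFun n 𝕜).repr (WithLp.toLp 2 fun i => B i j) i)
      = B := by
    ext i j; simp
  rw [hB, (CFC.sqrt_nonneg G).posSemidef.isHermitian.eq, CFC.sqrt_mul_sqrt_self G hG.nonneg]

theorem affineIndependent_vecCons_zero_iff {k V : Type*} [Ring k] [AddCommGroup V] [Module k V]
    {d : ℕ} (v : Fin d → V) :
    AffineIndependent k (vecCons 0 v) ↔ LinearIndependent k v := by
  rw [affineIndependent_iff_linearIndependent_vsub k _ 0,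
    ← linearIndependent_equiv (finSuccAboveEquiv 0)]
  convert Iff.rfl
  ext j
  simp [finSuccAboveEquiv]

noncomputable def sqDistGram {d : ℕ} (c : Fin (d + 1) → Fin (d + 1) → ℝ) :
    Matrix (Fin d) (Fin d) ℝ :=
  of fun i j => (c 0 i.succ + c 0 j.succ - c i.succ j.succ) / 2

section sqDistGram

variable {d : ℕ} {c : Fin (d + 1) → Fin (d + 1) → ℝ}

theorem dist_vecCons_zero_sq_of_gram_eq_sqDistGram {V : Type*} [NormedAddCommGroup V]
    [InnerProductSpace ℝ V] (hc0 : ∀ i, c i i = 0) (hcs : ∀ i j, c i j = c j i) {v : Fin d → V}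
    (hv : gram ℝ v = sqDistGram c) (i j : Fin (d + 1)) :
    dist (vecCons 0 v i) (vecCons 0 v j) ^ 2 = c i j := by
  have hinner : ∀ k l, ⟪v k, v l⟫_ℝ = (c 0 k.succ + c 0 l.succ - c k.succ l.succ) / 2 :=
    fun k l => congrFun (congrFun hv k) l
  have hnorm : ∀ k, ‖v k‖ ^ 2 = c 0 k.succ := fun k => by
    rw [← real_inner_self_eq_norm_sq, hinner, hc0]; ring
  cases i using Fin.cases with
  | zero =>
    cases j using Fin.cases with
    | zero => simp [hc0]
    | succ l => simp [dist_eq_norm, hnorm]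
  | succ k =>
    cases j using Fin.cases with
    | zero => simp [dist_eq_norm, hnorm, hcs k.succ]
    | succ l =>
      simp only [cons_val_succ, dist_eq_norm, norm_sub_sq_real, hnorm, hinner]
      ring

theorem posDef_sqDistGram (hc0 : ∀ i, c i i = 0) (hcs : ∀ i j, c i j = c j i) {β ε : ℝ}
    (hβ : 0 < β) (hε : 0 ≤ ε) (hεd : 3 * ε * d < β)
    (hc : ∀ i j, i ≠ j → c i j ∈ Set.Icc (β - ε) (β + ε)) :
    (sqDistGram c).PosDef := by
  have hherm : (sqDistGram c).IsHermitian := by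
    ext i j
    simp only [sqDistGram, conjTranspose_apply, of_apply, star_trivial, hcs j.succ i.succ]
    ring
  refine posDef_of_abs_sub_le hherm (a := β / 2) (b := β / 2) (η := 3 * ε / 2) (by positivity)
    (by positivity) (by rw [Fintype.card_fin]; linarith) fun i j => ?_
  have h0i := hc 0 i.succ (Fin.succ_ne_zero i).symm
  have h0j := hc 0 j.succ (Fin.succ_ne_zero j).symm
  rw [abs_le]
  simp only [Matrix.sub_apply, Matrix.add_apply, Matrix.smul_apply, smul_eq_mul, sqDistGram,
    of_apply]
  by_cases hij : i = j
  · subst hij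
    simp only [one_apply_eq, hc0]
    constructor <;> linarith [h0i.1, h0i.2]
  · have hsucc := hc i.succ j.succ (Fin.succ_injective _ |>.ne hij)
    simp only [one_apply_ne hij]
    constructor <;> linarith [h0i.1, h0i.2, h0j.1, h0j.2, hsucc.1, hsucc.2]

theorem exists_affineIndependent_dist_sq_eq (hc0 : ∀ i, c i i = 0) (hcs : ∀ i j, c i j = c j i)
    (hc : (sqDistGram c).PosDef) :
    ∃ w : Fin (d + 1) → EuclideanSpace ℝ (Fin d),
      AffineIndependent ℝ w ∧ ∀ i j, dist (w i) (w j) ^ 2 = c i j := by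
  obtain ⟨v, hv⟩ := hc.posSemidef.exists_gram_eq
  exact ⟨vecCons 0 v, (affineIndependent_vecCons_zero_iff v).mpr
    (linearIndependent_of_posDef_gram (hv ▸ hc)),
    dist_vecCons_zero_sq_of_gram_eq_sqDistGram hc0 hcs hv⟩

end sqDistGram

/-- If the differences of squared distances `‖xᵢ - xⱼ‖² - ‖zᵢ - zⱼ‖²` all lie in
`[β - ε, β + ε]` with `ε < β/(64d²)`, then they are realized by a simplex `w`, and the
concatenated points `fᵢ = (wᵢ, zᵢ)` form an isometric copy of `{x₀, …, x_d}`. -/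
theorem simplex_from_difference_of_squared_distances
    {H₁ H₂ : Type*} [NormedAddCommGroup H₁] [InnerProductSpace ℝ H₁]
    [NormedAddCommGroup H₂] [InnerProductSpace ℝ H₂]
    (d : ℕ) (β ε : ℝ) (hβ : 0 < β) (hε : 0 < ε) (hεβ : ε < β / (64 * (d : ℝ)^2))
    (x : Fin (d+1) → H₁) (z : Fin (d+1) → H₂)
    (hxz : ∀ i j : Fin (d+1), i ≠ j →
      (dist (x i) (x j))^2 - (dist (z i) (z j))^2 ∈ Set.Icc (β - ε) (β + ε)) :
    ∃ w : Fin (d+1) → EuclideanSpace ℝ (Fin d),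
      AffineIndependent ℝ w ∧
      (∀ i j : Fin (d+1), i ≠ j →
        (dist (w i) (w j))^2 = (dist (x i) (x j))^2 - (dist (z i) (z j))^2) ∧
      (∀ i j : Fin (d+1),
        dist ((WithLp.equiv 2 (EuclideanSpace ℝ (Fin d) × H₂)).symm (w i, z i))
             ((WithLp.equiv 2 (EuclideanSpace ℝ (Fin d) × H₂)).symm (w j, z j))
          = dist (x i) (x j)) := by
  set c : Fin (d + 1) → Fin (d + 1) → ℝ :=
    fun i j => dist (x i) (x j) ^ 2 - dist (z i) (z j) ^ 2
  have hc0 : ∀ i, c i i = 0 := by simp [c]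
  have hcs : ∀ i j, c i j = c j i := by simp [c, dist_comm]
  have hεd : 3 * ε * d < β := by
    rcases Nat.eq_zero_or_pos d with rfl | hd
    · simpa using hβ
    · have hd1 : (1 : ℝ) ≤ d := by exact_mod_cast hd
      rw [lt_div_iff₀ (by positivity)] at hεβ
      nlinarith
  obtain ⟨w, hw, hwc⟩ := exists_affineIndependent_dist_sq_eq hc0 hcs
    (posDef_sqDistGram hc0 hcs hβ hε.le hεd hxz)
  refine ⟨w, hw, fun i j _ => hwc i j, fun i j => ?_⟩
  rw [WithLp.prod_dist_eq_of_L2]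
  simp [hwc, c, dist_nonneg]
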